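/- A coloring (B,W) of the plane contains an (a,b,c)-triangle for every a, b, c > 0 satisfying the (possibly degenerate) triangle inequality with ¬(a = b = c), if and only if there exists a₀ > 0 such that the coloring contains an (a,a,a)-triangle for every a > 0 with a ≠ a₀. -/

import Mathlib

/-!
View a colouring as a map `c : ℂ → Bool` on the complex plane. The triangle on a base `X Y` with a
fixed shape has third vertex `X + ζ * (Y - X)`, so if no monochromatic triangle of that shape
exists, every monochromatic base forces the opposite colour on that vertex. Chasing forced colours
through five auxiliary points shows that a monochromatic `(p, p, q)`-triangle yields a
monochromatic equilateral triangle of side `p` or `q`, and that a monochromatic equilateral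
triangle of side `a` yields a monochromatic `(a, b, c)`-triangle whenever `a, b, c` satisfy the
triangle inequality. By the first fact at most one side length can lack monochromatic equilateral
triangles if all other triangles occur; by the second, a missing non-equilateral triangle makes
each of its (not all equal) side lengths miss equilateral triangles.
-/

/-- A set of three points is monochromatic for the coloring `(B, Bᶜ)`:
all three points are black (in `B`) or all three are white (in `Bᶜ`). -/
def Mono (B : Set (EuclideanSpace ℝ (Fin 2))) (X Y Z : EuclideanSpace ℝ (Fin 2)) : Prop :=
  (X ∈ B ∧ Y ∈ B ∧ Z ∈ B) ∨ (X ∉ B ∧ Y ∉ B ∧ Z ∉ B)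

/-- The coloring `(B, Bᶜ)` contains an `(a,b,c)`-triangle. -/
def ContainsTriangle (B : Set (EuclideanSpace ℝ (Fin 2))) (a b c : ℝ) : Prop :=
  ∃ X Y Z : EuclideanSpace ℝ (Fin 2),
    Mono B X Y Z ∧ dist X Y = a ∧ dist Y Z = b ∧ dist Z X = c

def HasMonoTriangle {P : Type*} [PseudoMetricSpace P] (c : P → Bool) (a b d : ℝ) : Prop :=
  ∃ X Y Z : P, c X = c Y ∧ c Y = c Z ∧ dist X Y = a ∧ dist Y Z = b ∧ dist Z X = d

namespace HasMonoTriangle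

variable {P Q : Type*} [PseudoMetricSpace P] [PseudoMetricSpace Q] {a b d : ℝ}

theorem rotate {c : P → Bool} (h : HasMonoTriangle c a b d) : HasMonoTriangle c b d a := by
  obtain ⟨X, Y, Z, hXY, hYZ, dXY, dYZ, dZX⟩ := h
  exact ⟨Y, Z, X, hYZ, (hXY.trans hYZ).symm, dYZ, dZX, dXY⟩

theorem comp_isometryEquiv_iff (f : P ≃ᵢ Q) (c : Q → Bool) :
    HasMonoTriangle (c ∘ f) a b d ↔ HasMonoTriangle c a b d := by
  constructor
  · rintro ⟨X, Y, Z, hXY, hYZ, dXY, dYZ, dZX⟩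
    exact ⟨f X, f Y, f Z, hXY, hYZ, by rwa [f.dist_eq], by rwa [f.dist_eq], by rwa [f.dist_eq]⟩
  · rintro ⟨X, Y, Z, hXY, hYZ, dXY, dYZ, dZX⟩
    refine ⟨f.symm X, f.symm Y, f.symm Z, ?_, ?_, ?_, ?_, ?_⟩ <;>
      simpa only [Function.comp_apply, f.apply_symm_apply, f.symm.dist_eq]
        using ‹_›

end HasMonoTriangle

theorem containsTriangle_iff_hasMonoTriangle (B : Set (EuclideanSpace ℝ (Fin 2)))
    [DecidablePred (· ∈ B)] (a b d : ℝ) :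
    ContainsTriangle B a b d ↔ HasMonoTriangle (fun X => decide (X ∈ B)) a b d := by
  simp only [ContainsTriangle, HasMonoTriangle, Mono, decide_eq_decide]
  constructor <;> rintro ⟨X, Y, Z, h⟩ <;> exact ⟨X, Y, Z, by tauto⟩

namespace Complex

theorem dist_eq_norm_mul_dist {P Q R S w : ℂ} (h : P - Q = w * (R - S)) :
    dist P Q = ‖w‖ * dist R S := by
  rw [dist_eq_norm, h, norm_mul, dist_eq_norm]

theorem exists_norm_eq_one_norm_one_sub_eq_one :
    ∃ ω : ℂ, ‖ω‖ = 1 ∧ ‖1 - ω‖ = 1 ∧ ω ^ 2 = ω - 1 := by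
  have h3 : √3 ^ 2 = 3 := Real.sq_sqrt (by norm_num)
  have norm_eq_one (x y : ℝ) (hx : x ^ 2 = 1 / 4) (hy : y ^ 2 = 3 / 4) : ‖(⟨x, y⟩ : ℂ)‖ = 1 := by
    rw [norm_def, normSq_mk, Real.sqrt_eq_one]
    linear_combination hx + hy
  refine ⟨⟨1 / 2, √3 / 2⟩, norm_eq_one _ _ (by norm_num) (by linear_combination h3 / 4), ?_, ?_⟩
  · convert norm_eq_one (1 / 2) (-(√3 / 2)) (by norm_num) (by linear_combination h3 / 4) using 2
    apply Complex.ext <;> simp only [sub_re, sub_im, one_re, one_im] <;> ring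
  · refine Complex.ext ?_ ?_ <;> simp only [pow_two, mul_re, mul_im, sub_re, sub_im, one_re, one_im]
    · linear_combination -h3 / 4
    · ring

theorem exists_norm_mul_eq_norm_one_sub_mul_eq {a b d : ℝ} (ha : 0 < a)
    (h₁ : a ≤ b + d) (h₂ : b ≤ a + d) (h₃ : d ≤ a + b) :
    ∃ ζ : ℂ, ‖ζ‖ * a = d ∧ ‖1 - ζ‖ * a = b := by
  -- the foot of the altitude from the apex of a triangle with base `[0, a]`, by the law of cosines
  set x := (a ^ 2 + d ^ 2 - b ^ 2) / (2 * a)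
  have hx : x ^ 2 ≤ d ^ 2 := by
    rw [div_pow, div_le_iff₀ (by positivity)]
    nlinarith [mul_nonneg (mul_nonneg (by linarith : 0 ≤ b - a + d) (by linarith : 0 ≤ b + a - d))
      (mul_nonneg (by linarith : 0 ≤ a + d - b) (by linarith : 0 ≤ a + d + b))]
  set z : ℂ := ⟨x, √(d ^ 2 - x ^ 2)⟩
  have hy := Real.sq_sqrt (sub_nonneg.2 hx)
  have hz : ‖z‖ = d := by
    rw [← pow_left_inj₀ (norm_nonneg _) (by linarith) two_ne_zero, Complex.sq_norm, normSq_mk]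
    linear_combination hy
  have hax : 2 * a * x = a ^ 2 + d ^ 2 - b ^ 2 := by
    simp only [x]
    field_simp
  have haz : ‖(a : ℂ) - z‖ = b := by
    rw [← pow_left_inj₀ (norm_nonneg _) (by linarith) two_ne_zero, Complex.sq_norm]
    simp only [normSq_apply, sub_re, sub_im, ofReal_re, ofReal_im, z]
    linear_combination hy - hax
  refine ⟨z / a, ?_, ?_⟩
  · rw [norm_div, norm_real, Real.norm_of_nonneg ha.le, div_mul_cancel₀ _ ha.ne', hz]
  · rw [one_sub_div (ofReal_ne_zero.2 ha.ne'), norm_div, norm_real,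
      Real.norm_of_nonneg ha.le, div_mul_cancel₀ _ ha.ne', haz]

end Complex

section Coloring

open Complex

variable {c : ℂ → Bool}

theorem color_add_mul_sub_eq_not {a b d : ℝ} {ζ X Y : ℂ} (h : ¬HasMonoTriangle c a b d)
    (hb : ‖1 - ζ‖ * a = b) (hd : ‖ζ‖ * a = d) (hXY : dist X Y = a) (hc : c X = c Y) :
    c (X + ζ * (Y - X)) = !c X := by
  refine Bool.eq_not_iff.2 fun hZ => h ⟨X, Y, _, hc, hc.symm.trans hZ.symm, hXY, ?_, ?_⟩
  · rw [dist_eq_norm_mul_dist (w := 1 - ζ) (R := Y) (S := X) (by ring), dist_comm, hXY, hb]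
  · rw [dist_eq_norm_mul_dist (w := ζ) (R := Y) (S := X) (by ring), dist_comm, hXY, hd]

theorem HasMonoTriangle.equilateral_of_isosceles {p q : ℝ} (h : HasMonoTriangle c p p q) :
    HasMonoTriangle c p p p ∨ HasMonoTriangle c q q q := by
  obtain ⟨ω, hω, hω₁, hω₂⟩ := exists_norm_eq_one_norm_one_sub_eq_one
  obtain ⟨X, Y, Z, hXY, hYZ, dXY, dYZ, dZX⟩ := h
  by_contra! ⟨hp, hq⟩
  have flip_p {P Q : ℂ} : dist P Q = p → c P = c Q → c (P + ω * (Q - P)) = !c P :=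
    color_add_mul_sub_eq_not hp (by rw [hω₁, one_mul]) (by rw [hω, one_mul])
  have flip_q {P Q : ℂ} : dist P Q = q → c P = c Q → c (P + ω * (Q - P)) = !c P :=
    color_add_mul_sub_eq_not hq (by rw [hω₁, one_mul]) (by rw [hω, one_mul])
  set P₁ := Z + ω * (Y - Z)
  set P₂ := Y + ω * (X - Y)
  set P₃ := Z + ω * (X - Z)
  set P₄ := P₃ + ω * (P₂ - P₃)
  have h₁ : c P₁ = !c Z := flip_p (by rwa [dist_comm]) hYZ.symm
  have h₂ : c P₂ = !c Y := flip_p (by rwa [dist_comm]) hXY.symm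
  have h₃ : c P₃ = !c Z := flip_q dZX (hXY.trans hYZ).symm
  have h₄ : c P₄ = c Y := by
    have d₃₂ : dist P₃ P₂ = p := by
      rw [dist_eq_norm_mul_dist (w := 1 - ω) (R := Z) (S := Y) (by ring), hω₁, one_mul, dist_comm,
        dYZ]
    rw [flip_p d₃₂ (by rw [h₃, h₂, hYZ]), h₃, Bool.not_not, hYZ]
  have h₅ : c (P₁ + ω * (P₃ - P₁)) = c Y := by
    have d₁₃ : dist P₁ P₃ = p := by
      rw [dist_eq_norm_mul_dist (w := ω) (R := Y) (S := X) (by ring), hω, one_mul, dist_comm, dXY]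
    rw [flip_p d₁₃ (by rw [h₁, h₃]), h₁, Bool.not_not, hYZ]
  -- as `ω ^ 2 = ω - 1`, this last point is also the apex of an equilateral triangle on `Y P₄`
  have h₅' : c (P₁ + ω * (P₃ - P₁)) = !c Y := by
    have d₀₄ : dist Y P₄ = q := by
      rw [dist_eq_norm_mul_dist (w := ω) (R := Z) (S := X) (by linear_combination (Y - Z) * hω₂),
        hω, one_mul, dZX]
    rw [show P₁ + ω * (P₃ - P₁) = Y + ω * (P₄ - Y) by linear_combination (Z - Y) * (1 - ω) * hω₂]
    exact flip_q d₀₄ h₄.symm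
  simp [h₅] at h₅'

theorem HasMonoTriangle.of_equilateral {a b d : ℝ} (ha : 0 < a) (h₁ : a ≤ b + d) (h₂ : b ≤ a + d)
    (h₃ : d ≤ a + b) (h : HasMonoTriangle c a a a) : HasMonoTriangle c a b d := by
  obtain ⟨ζ, hζd, hζb⟩ := exists_norm_mul_eq_norm_one_sub_mul_eq ha h₁ h₂ h₃
  obtain ⟨U, V, W, hUV, hVW, dUV, dVW, dWU⟩ := h
  by_contra hno
  have flip {P Q : ℂ} : dist P Q = a → c P = c Q → c (P + ζ * (Q - P)) = !c P :=
    color_add_mul_sub_eq_not hno hζb hζd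
  set N₂ := U + ζ * (V - U)
  set N₄ := W + ζ * (V - W)
  set N₅ := U + ζ * (V - W)
  set N₆ := W + ζ * (U - W)
  set N₇ := U + (ζ - 1) * (V - W)
  have h₂ : c N₂ = !c U := flip dUV hUV
  have h₄ : c N₄ = !c U := by rw [flip (by rwa [dist_comm]) hVW.symm, ← hVW, hUV]
  have h₆ : c N₆ = !c U := by rw [flip dWU (hUV.trans hVW).symm, ← hVW, hUV]
  have h₅ : c N₅ = c U := by
    by_contra hne
    have d₅₄ : dist N₅ N₄ = a := by
      rw [dist_eq_norm_mul_dist (w := 1) (R := U) (S := W) (by ring), norm_one, one_mul,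
        dist_comm, dWU]
    have := flip d₅₄ (by rw [Bool.eq_not_of_ne hne, h₄])
    rw [show N₅ + ζ * (N₄ - N₅) = N₂ by ring, h₂, Bool.eq_not_of_ne hne] at this
    simp at this
  have h₇ : c N₇ = c U := by
    by_contra hne
    have d₄₇ : dist N₄ N₇ = a := by
      rw [dist_eq_norm_mul_dist (w := 1) (R := V) (S := U) (by ring), norm_one, one_mul,
        dist_comm, dUV]
    have := flip d₄₇ (by rw [Bool.eq_not_of_ne hne, h₄])
    rw [show N₄ + ζ * (N₇ - N₄) = N₆ by ring, h₆, h₄] at this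
    simp at this
  have d₅₇ : dist N₅ N₇ = a := by
    rw [dist_eq_norm_mul_dist (w := 1) (R := V) (S := W) (by ring), norm_one, one_mul, dVW]
  -- `U` is itself the third vertex of an `(a, b, d)`-triangle on `N₅ N₇`
  have := flip d₅₇ (h₅.trans h₇.symm)
  rw [show N₅ + ζ * (N₇ - N₅) = U by ring, h₅] at this
  simp at this

theorem exists_forall_hasMonoTriangle_equilateral
    (h : ∀ a b d : ℝ, 0 < a → 0 < b → 0 < d → a ≤ b + d → b ≤ a + d → d ≤ a + b →
      ¬(a = b ∧ b = d) → HasMonoTriangle c a b d) :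
    ∃ a₀ : ℝ, 0 < a₀ ∧ ∀ a : ℝ, 0 < a → a ≠ a₀ → HasMonoTriangle c a a a := by
  by_cases hall : ∀ a : ℝ, 0 < a → HasMonoTriangle c a a a
  · exact ⟨1, one_pos, fun a ha _ => hall a ha⟩
  push Not at hall
  obtain ⟨p, hp, hpno⟩ := hall
  refine ⟨p, hp, fun a ha hap => ?_⟩
  by_contra hano
  rcases le_or_gt a (2 * p) with hle | hlt
  · have := h p p a hp hp ha (by linarith) (by linarith) (by linarith) fun h => hap h.2.symm
    exact this.equilateral_of_isosceles.elim hpno hano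
  · have := h a a p ha ha hp (by linarith) (by linarith) (by linarith) fun h => hap h.2
    exact this.equilateral_of_isosceles.elim hano hpno

theorem forall_hasMonoTriangle_of_exists_equilateral
    (h : ∃ a₀ : ℝ, 0 < a₀ ∧ ∀ a : ℝ, 0 < a → a ≠ a₀ → HasMonoTriangle c a a a)
    {a b d : ℝ} (ha : 0 < a) (hb : 0 < b) (hd : 0 < d) (h₁ : a ≤ b + d) (h₂ : b ≤ a + d)
    (h₃ : d ≤ a + b) (hne : ¬(a = b ∧ b = d)) : HasMonoTriangle c a b d := by
  obtain ⟨a₀, -, h⟩ := h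
  by_cases hab : a = a₀
  · by_cases hbd : b = a₀
    · have hd₀ : d ≠ a₀ := fun hd₀ => hne ⟨hab.trans hbd.symm, hbd.trans hd₀.symm⟩
      exact ((h d hd hd₀).of_equilateral hd (by linarith) (by linarith) (by linarith)).rotate
    · exact ((h b hb hbd).of_equilateral hb (by linarith) (by linarith) (by linarith)).rotate.rotate
  · exact (h a ha hab).of_equilateral ha h₁ h₂ h₃

end Coloring

theorem stmt3 (B : Set (EuclideanSpace ℝ (Fin 2))) :
    (∀ a b c : ℝ, 0 < a → 0 < b → 0 < c → a ≤ b + c → b ≤ a + c → c ≤ a + b →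
      ¬(a = b ∧ b = c) → ContainsTriangle B a b c) ↔
    (∃ a₀ : ℝ, 0 < a₀ ∧ ∀ a : ℝ, 0 < a → a ≠ a₀ → ContainsTriangle B a a a) := by
  classical
  have transfer (a b d : ℝ) : ContainsTriangle B a b d ↔
      HasMonoTriangle ((fun X => decide (X ∈ B)) ∘ Complex.orthonormalBasisOneI.repr) a b d := by
    rw [containsTriangle_iff_hasMonoTriangle]
    exact (HasMonoTriangle.comp_isometryEquiv_iff
      Complex.orthonormalBasisOneI.repr.toIsometryEquiv _).symm
  simp only [transfer]
  exact ⟨exists_forall_hasMonoTriangle_equilateral,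
    fun h _ _ _ => forall_hasMonoTriangle_of_exists_equilateral h⟩
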